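/- Every element of the fundamental group of the Möbius band is an integer power of the class of the central loop: for every g ∈ π₁(M, m₀) there exists n ∈ ℤ with g = [α]^n, where α is the loop t ↦ [(t, 1/2)] traversing the central circle once. -/

import Mathlib

open scoped unitInterval

attribute [local instance] Path.Homotopic.setoid

/-- The gluing relation on the square `[0,1] × [0,1]`: `(0, y)` is identified with
`(1, 1 - y)`. The Möbius band is the quotient by the equivalence relation generated by it. -/
def MobiusRel : I × I → I × I → Prop :=
  fun p q => p.1 = 0 ∧ q.1 = 1 ∧ q.2 = unitInterval.symm p.2

/-- The Möbius band, as the quotient of the square `[0,1] × [0,1]` by the equivalence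
relation generated by identifying `(0, y)` with `(1, 1 - y)`, with the quotient topology. -/
def MobiusBand : Type := Quot MobiusRel

instance : TopologicalSpace MobiusBand :=
  inferInstanceAs (TopologicalSpace (Quot MobiusRel))

/-- The midpoint `1/2` of the unit interval. -/
noncomputable def half : I := ⟨1 / 2, by norm_num⟩

/-- The base point of the Möbius band: the class of the point `(0, 1/2)`. -/
noncomputable def mobiusBase : MobiusBand := Quot.mk MobiusRel ((0 : I), half)

lemma half_symm : half = unitInterval.symm half :=
  Subtype.ext <| by rw [unitInterval.coe_symm_eq]; norm_num [half]

/-- The central loop `α` of the Möbius band: the image in the quotient of the path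
`t ↦ (t, 1/2)`, a loop based at the class of `(0, 1/2)`. -/
noncomputable def mobiusLoop : Path mobiusBase mobiusBase where
  toFun t := Quot.mk MobiusRel (t, half)
  continuous_toFun := continuous_quot_mk.comp (continuous_id.prodMk continuous_const)
  source' := rfl
  target' := (Quot.sound ⟨rfl, rfl, half_symm⟩).symm

/-- The homotopy class of the central loop, as an element of the fundamental group of the
Möbius band. -/
noncomputable def mobiusLoopClass : FundamentalGroup MobiusBand mobiusBase :=
  FundamentalGroup.fromPath (X := TopCat.of MobiusBand) ⟦mobiusLoop⟧

/-! The projection `[(x, y)] ↦ x` onto the circle `ℝ/ℤ` has the central circle as a section,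
and contracting every fibre linearly onto its midpoint deformation retracts the band onto that
section while fixing the base point; so the central circle induces a surjection on fundamental
groups. The fundamental group of `ℝ/ℤ` is generated by the class of `t ↦ t`, because the universal
cover `ℝ → ℝ/ℤ` identifies it with the deck group `ℤ`, and the central circle maps that class
to `[α]`. -/

namespace FundamentalGroup

variable {X Y Z : Type*} [TopologicalSpace X] [TopologicalSpace Y] [TopologicalSpace Z]

theorem mapOfEq_id (x : X) : mapOfEq (.id X) (x := x) (y := x) rfl = MonoidHom.id _ := by
  ext γ
  induction γ using Path.Homotopic.Quotient.ind
  exact (mapOfEq_apply ..).trans rfl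

theorem mapOfEq_comp (g : C(Y, Z)) (f : C(X, Y)) {x : X} {y : Y} {z : Z} (hf : f x = y)
    (hg : g y = z) :
    mapOfEq (g.comp f) (by simp [hf, hg]) = (mapOfEq g hg).comp (mapOfEq f hf) := by
  ext γ
  induction γ using Path.Homotopic.Quotient.ind
  subst hf hg
  simp [mapOfEq_apply, ← Path.Homotopic.Quotient.mk_map]

theorem mapOfEq_eq_of_homotopicRel {f₀ f₁ : C(X, Y)} {x : X} {y : Y} (h₀ : f₀ x = y)
    (h₁ : f₁ x = y) (H : f₀.HomotopicRel f₁ {x}) : mapOfEq f₀ h₀ = mapOfEq f₁ h₁ := by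
  obtain ⟨H⟩ := H
  ext γ
  induction γ using Path.Homotopic.Quotient.ind with | _ γ
  simp only [mapOfEq_apply, ← Path.Homotopic.Quotient.mk_map, ← Path.Homotopic.Quotient.mk_cast]
  refine Path.Homotopic.Quotient.eq.mpr
    ⟨{ toHomotopy := H.toHomotopy.compContinuousMap γ.toContinuousMap, prop' := ?_ }⟩
  rintro t s (rfl | rfl) <;> simp [H.eq_fst, h₀]

theorem mapOfEq_surjective_of_homotopicRel {i : C(Y, X)} {r : C(X, Y)} {x : X} {y : Y}
    (hi : i y = x) (hr : r x = y) (H : (ContinuousMap.id X).HomotopicRel (i.comp r) {x}) :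
    Function.Surjective (mapOfEq i hi) := fun g ↦
  ⟨mapOfEq r hr g, by
    rw [← MonoidHom.comp_apply, ← mapOfEq_comp, mapOfEq_eq_of_homotopicRel (y := x) _ rfl H.symm,
      mapOfEq_id, MonoidHom.id_apply]⟩

end FundamentalGroup

theorem unitInterval.symm_convexComb (x y t : I) :
    σ (Set.Icc.convexComb x y t) = Set.Icc.convexComb (σ x) (σ y) t :=
  Subtype.ext <| by simp only [unitInterval.coe_symm_eq, Set.Icc.coe_convexComb]; ring

namespace AddCircle

variable (p : ℝ)

noncomputable def fundamentalLoop : Path (0 : AddCircle p) 0 where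
  toFun t := ((p * t : ℝ) : AddCircle p)
  continuous_toFun := by fun_prop
  source' := by simp
  target' := by simp

theorem exists_eq_zpow_fundamentalLoop (g : FundamentalGroup (AddCircle p) 0) :
    ∃ n : ℤ, g = FundamentalGroup.fromPath (.mk (fundamentalLoop p)) ^ n := by
  have hp := isAddQuotientCoveringMap_coe p
  let Φ := hp.fundamentalGroupEquiv ⟨0, rfl⟩
  have hloop : Φ (.fromPath (.mk (fundamentalLoop p))) =
      MulOpposite.op (Multiplicative.ofAdd ⟨p, AddSubgroup.mem_zmultiples p⟩) := by
    let lift : Path (0 : ℝ) p :=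
      { toFun t := p * t
        continuous_toFun := by fun_prop
        source' := by simp
        target' := by simp }
    refine hp.fundamentalGroupToMulOpposite_apply_eq_Iff.mpr ?_
    rw [hp.isCoveringMap.monodromy_eq_of_map_eq (γ := .mk (fundamentalLoop p)) (ex := ⟨0, rfl⟩)
      (ey := ⟨p, by simp⟩) (.mk lift) rfl]
    simp
  obtain ⟨n, hn⟩ := (Φ g).unop.toAdd.2
  refine ⟨n, Φ.injective ?_⟩
  rw [map_zpow, hloop]
  exact MulOpposite.unop_injective <| Multiplicative.toAdd.injective <| Subtype.ext <| by
    simp [← hn]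

end AddCircle

noncomputable def mobiusCentralCircle : C(AddCircle (1 : ℝ), MobiusBand) :=
  ⟨AddCircle.liftIco 1 0 mobiusLoop.extend, AddCircle.liftIco_zero_continuous
    (by simp) mobiusLoop.continuous_extend.continuousOn⟩

theorem mobiusCentralCircle_zero : mobiusCentralCircle 0 = mobiusBase :=
  (AddCircle.liftIco_zero_coe_apply (x := 0) ⟨le_rfl, zero_lt_one⟩).trans mobiusLoop.extend_zero

theorem mobiusCentralCircle_coe (t : I) : mobiusCentralCircle (t : ℝ) = mobiusLoop t := by
  rcases t.2.2.lt_or_eq with ht | ht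
  · exact (AddCircle.liftIco_zero_coe_apply ⟨t.2.1, ht⟩).trans (mobiusLoop.extend_extends' t)
  · obtain rfl : t = 1 := Subtype.ext ht
    rw [Set.Icc.coe_one, AddCircle.coe_period, mobiusLoop.target, mobiusCentralCircle_zero]

noncomputable def mobiusProj : C(MobiusBand, AddCircle (1 : ℝ)) :=
  ⟨Quot.lift (fun p : I × I ↦ ((p.1 : ℝ) : AddCircle (1 : ℝ))) (by
    rintro p q ⟨hp, hq, -⟩
    simp [hp, hq, AddCircle.coe_period]), continuous_quot_lift _ (by fun_prop)⟩

theorem mobiusProj_base : mobiusProj mobiusBase = 0 := by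
  change (((0 : I) : ℝ) : AddCircle (1 : ℝ)) = 0
  simp

noncomputable def mobiusRetraction :
    (ContinuousMap.id MobiusBand).HomotopyRel (mobiusCentralCircle.comp mobiusProj)
      {mobiusBase} where
  toFun p := Quot.lift (fun q : I × I ↦ Quot.mk MobiusRel (q.1, Set.Icc.convexComb q.2 half p.1))
    (by
      rintro q q' ⟨h0, h1, h2⟩
      exact Quot.sound ⟨h0, h1, by rw [h2, unitInterval.symm_convexComb, ← half_symm]⟩) p.2
  continuous_toFun := isQuotientMap_quot_mk.continuous_lift_prod_right <|
    continuous_quot_mk.comp <| by fun_prop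
  map_zero_left m := by
    induction m using Quot.ind with | _ q
    change Quot.mk MobiusRel (q.1, Set.Icc.convexComb q.2 half 0) = Quot.mk MobiusRel q
    rw [Set.Icc.convexComb_zero]
  map_one_left m := by
    induction m using Quot.ind with | _ q
    change Quot.mk MobiusRel (q.1, Set.Icc.convexComb q.2 half 1) = mobiusCentralCircle (q.1 : ℝ)
    rw [Set.Icc.convexComb_one, mobiusCentralCircle_coe]
    rfl
  prop' s m hm := by
    obtain rfl := Set.mem_singleton_iff.mp hm
    change Quot.mk MobiusRel (0, Set.Icc.convexComb half half s) = mobiusBase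
    rw [Set.Icc.convexComb_eq]
    rfl

theorem mapOfEq_mobiusCentralCircle_fundamentalLoop :
    FundamentalGroup.mapOfEq mobiusCentralCircle mobiusCentralCircle_zero
      (.fromPath (.mk (AddCircle.fundamentalLoop 1))) = mobiusLoopClass := by
  rw [FundamentalGroup.mapOfEq_apply, ← Path.Homotopic.Quotient.mk_map,
    ← Path.Homotopic.Quotient.mk_cast]
  congr 1
  ext t
  simp [AddCircle.fundamentalLoop, mobiusCentralCircle_coe]

/-- Every element of the fundamental group of the Möbius band is an integer power of the
class of the central loop `t ↦ [(t, 1/2)]`. -/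
theorem mobiusBand_fundamentalGroup_generated_by_loop
    (g : FundamentalGroup MobiusBand mobiusBase) :
    ∃ n : ℤ, g = mobiusLoopClass ^ n := by
  obtain ⟨h, rfl⟩ := FundamentalGroup.mapOfEq_surjective_of_homotopicRel
    mobiusCentralCircle_zero mobiusProj_base ⟨mobiusRetraction⟩ g
  obtain ⟨n, rfl⟩ := AddCircle.exists_eq_zpow_fundamentalLoop 1 h
  exact ⟨n, by rw [map_zpow, mapOfEq_mobiusCentralCircle_fundamentalLoop]⟩
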